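/- arXiv:2009.14820 — 2 statements merged into one kernel-verified Lean document; each statement's English description precedes it below -/
import Mathlib

section
/- Let V, Z ∈ ℝ^{p×p}, W ∈ ℝ^{p×q}, X ∈ ℝ^{q×p}, Y ∈ ℝ^{q×q}. If V and Y - X V⁻¹ W are invertible, then det([[V+Z, W],[X, Y]]) = det(V) · det(Y - X V⁻¹ W) · det(I + V⁻¹(I + W (Y - X V⁻¹ W)⁻¹ X V⁻¹) Z). -/
open Matrix

theorem stmt_11 (p q : ℕ)
    (V Z : Matrix (Fin p) (Fin p) ℝ) (W : Matrix (Fin p) (Fin q) ℝ)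
    (X : Matrix (Fin q) (Fin p) ℝ) (Y : Matrix (Fin q) (Fin q) ℝ)
    (hV : IsUnit V.det) (hS : IsUnit (Y - X * V⁻¹ * W).det) :
    (Matrix.fromBlocks (V + Z) W X Y).det
      = V.det * (Y - X * V⁻¹ * W).det
        * (1 + V⁻¹ * (1 + W * (Y - X * V⁻¹ * W)⁻¹ * X * V⁻¹) * Z).det := by
  set S := Y - X * V⁻¹ * W with hSdef
  have hVV : V * V⁻¹ = 1 := mul_nonsing_inv V hV
  have hSS : S * S⁻¹ = 1 := mul_nonsing_inv S hS
  set A := V⁻¹ * (1 + W * S⁻¹ * X * V⁻¹) with hA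
  set C := -(S⁻¹ * (X * V⁻¹)) with hC
  have h1 : V * A + W * C = 1 := by
    rw [hA, hC, ← Matrix.mul_assoc, hVV, Matrix.one_mul]
    simp only [Matrix.mul_neg, Matrix.mul_assoc]
    abel
  have hY : Y = S + X * V⁻¹ * W := by rw [hSdef]; abel
  have hSS' : S * (S⁻¹ * (X * V⁻¹)) = X * V⁻¹ := by
    rw [← Matrix.mul_assoc, hSS, Matrix.one_mul]
  have h2 : X * A + Y * C = 0 := by
    rw [hA, hC, hY]
    simp only [Matrix.add_mul, Matrix.mul_add, Matrix.mul_neg, Matrix.mul_one,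
      Matrix.mul_assoc]
    rw [hSS']
    abel
  have e1 : V * (1 + A * Z) + W * (C * Z) = V + Z := by
    rw [Matrix.mul_add, Matrix.mul_one, ← Matrix.mul_assoc V A Z, ← Matrix.mul_assoc W C Z,
      add_assoc, ← Matrix.add_mul, h1, Matrix.one_mul]
  have e2 : X * (1 + A * Z) + Y * (C * Z) = X := by
    rw [Matrix.mul_add, Matrix.mul_one, ← Matrix.mul_assoc X A Z, ← Matrix.mul_assoc Y C Z,
      add_assoc, ← Matrix.add_mul, h2, Matrix.zero_mul, add_zero]
  have key : fromBlocks (V + Z) W X Y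
      = fromBlocks V W X Y * fromBlocks (1 + A * Z) 0 (C * Z) 1 := by
    rw [fromBlocks_multiply, e1, e2, Matrix.mul_zero, zero_add, Matrix.mul_one,
      Matrix.mul_zero, zero_add, Matrix.mul_one]
  haveI : Invertible V := invertibleOfIsUnitDet V hV
  rw [key, det_mul, det_fromBlocks_zero₁₂, det_fromBlocks₁₁, det_one, mul_one,
    invOf_eq_nonsing_inv, ← hSdef, hA, Matrix.mul_assoc]
end

section
/- Let n = n₁ + n₂ and suppose B ∈ ℝ^{n₁×n₂} and C ∈ ℝ^{n₂×n₂} with n₂ < n₁/2. Then the matrix J = [[0, -B],[Bᵀ, -C]] ∈ ℝ^{n×n} is not Hurwitz stable; equivalently, there is no symmetric positive definite P with Jᵀ P + P J negative definite. -/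
/-!
If `Jᵀ P + P J` were negative definite, so would be its top-left `n₁ × n₁` block. Because the
top-left block of `J` vanishes, that block equals `-(B P₂ᵀ + P₂ Bᵀ)`, which factors through
`ℝ^{2 n₂}` and so has rank at most `2 n₂ < n₁`, contradicting invertibility. Hurwitz stability
fails for a simpler reason: `n₂ < n₁` forces `Bᵀ` to have a kernel vector `v`, and `(v, 0)` is
a kernel vector of `J`, so `0` is an eigenvalue.
-/

open Matrix

namespace Matrix

variable {l m R K : Type*} [Fintype l] [Fintype m]

theorem det_fromBlocks_zero₁₁_of_card_lt [DecidableEq l] [DecidableEq m] [Field K]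
    (B : Matrix l m K) (C : Matrix m l K) (D : Matrix m m K)
    (h : Fintype.card m < Fintype.card l) : (fromBlocks 0 B C D).det = 0 := by
  have hker : LinearMap.ker C.mulVecLin ≠ ⊥ :=
    LinearMap.ker_ne_bot_of_finrank_lt (by simpa using h)
  obtain ⟨v, hv, hv0⟩ := Submodule.exists_mem_ne_zero_of_ne_bot hker
  rw [← exists_mulVec_eq_zero_iff]
  refine ⟨Sum.elim v 0, fun h0 ↦ hv0 (funext fun i ↦ congrFun h0 (Sum.inl i)), ?_⟩
  rw [LinearMap.mem_ker, mulVecLin_apply] at hv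
  simp [fromBlocks_mulVec, hv]

theorem toBlocks₁₁_transpose_mul_add_mul_fromBlocks_zero₁₁ [NonUnitalCommSemiring R]
    (B : Matrix l m R) (C : Matrix m l R) (D : Matrix m m R) (P : Matrix (l ⊕ m) (l ⊕ m) R) :
    ((fromBlocks 0 B C D)ᵀ * P + P * fromBlocks 0 B C D).toBlocks₁₁ =
      Cᵀ * P.toBlocks₂₁ + P.toBlocks₁₂ * C := by
  conv_lhs => rw [← fromBlocks_toBlocks P]
  simp [fromBlocks_transpose, fromBlocks_multiply, fromBlocks_add]

theorem rank_transpose_mul_add_mul_le [CommRing R] [StrongRankCondition R]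
    (C X : Matrix m l R) (Y : Matrix l m R) :
    (Cᵀ * X + Y * C).rank ≤ 2 * Fintype.card m := by
  rw [← fromCols_mul_fromRows]
  calc (fromCols Cᵀ Y * fromRows X C).rank ≤ (fromRows X C).rank := rank_mul_le_right _ _
    _ ≤ Fintype.card (m ⊕ m) := rank_le_card_height _
    _ = 2 * Fintype.card m := by rw [Fintype.card_sum, two_mul]

theorem not_posDef_neg_transpose_mul_add_mul_fromBlocks_zero₁₁ [DecidableEq l] [Field K]
    [PartialOrder K] [StarRing K]
    (B : Matrix l m K) (C : Matrix m l K) (D : Matrix m m K) (P : Matrix (l ⊕ m) (l ⊕ m) K)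
    (h : 2 * Fintype.card m < Fintype.card l) :
    ¬ (-((fromBlocks 0 B C D)ᵀ * P + P * fromBlocks 0 B C D)).PosDef := by
  intro hQ
  have hunit : IsUnit (-((fromBlocks 0 B C D)ᵀ * P + P * fromBlocks 0 B C D).toBlocks₁₁) :=
    (hQ.submatrix Sum.inl_injective).isUnit
  have hrank := rank_of_isUnit _ ((IsUnit.neg_iff _).mp hunit)
  rw [toBlocks₁₁_transpose_mul_add_mul_fromBlocks_zero₁₁] at hrank
  have := rank_transpose_mul_add_mul_le C P.toBlocks₂₁ P.toBlocks₁₂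
  omega

end Matrix

theorem stmt_13 (n₁ n₂ : ℕ) (hdim : 2 * n₂ < n₁)
    (B : Matrix (Fin n₁) (Fin n₂) ℝ) (C : Matrix (Fin n₂) (Fin n₂) ℝ)
    (J : Matrix (Fin n₁ ⊕ Fin n₂) (Fin n₁ ⊕ Fin n₂) ℝ)
    (hJ : J = Matrix.fromBlocks 0 (-B) Bᵀ (-C)) :
    (¬ ∀ lam ∈ spectrum ℂ (J.map (Complex.ofReal)), lam.re < 0) ∧
    (¬ ∃ P : Matrix (Fin n₁ ⊕ Fin n₂) (Fin n₁ ⊕ Fin n₂) ℝ,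
        P.PosDef ∧ (-(Jᵀ * P + P * J)).PosDef) := by
  subst hJ
  constructor
  · intro hstable
    have hdet : (fromBlocks 0 (-B) Bᵀ (-C)).det = 0 :=
      det_fromBlocks_zero₁₁_of_card_lt _ _ _ (by simp only [Fintype.card_fin]; omega)
    have hdetℂ : ((fromBlocks 0 (-B) Bᵀ (-C)).map Complex.ofReal).det = 0 := by
      have := (Complex.ofRealHom.map_det (fromBlocks 0 (-B) Bᵀ (-C))).symm
      rwa [hdet, map_zero] at this
    have hzero : (0 : ℂ) ∈ spectrum ℂ ((fromBlocks 0 (-B) Bᵀ (-C)).map Complex.ofReal) := by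
      rw [spectrum.zero_mem_iff, isUnit_iff_isUnit_det, hdetℂ]
      exact not_isUnit_zero
    simpa using hstable 0 hzero
  · rintro ⟨P, -, hQ⟩
    exact not_posDef_neg_transpose_mul_add_mul_fromBlocks_zero₁₁ _ _ _ P (by simpa using hdim) hQ
end
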